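/- arXiv:1510.01316 — 15 statements merged into one kernel-verified Lean document; each statement's English description precedes it below -/
import Mathlib

section
/- Every Bol*-AG-band is a commutative semigroup; that is, if a magma S satisfies the left invertive law, the Bol* identity a·((b·c)·d) = ((a·b)·c)·d, and every element is idempotent (a·a = a for all a), then S is commutative (a·b = b·a for all a,b) and associative ((a·b)·c = a·(b·c) for all a,b,c). -/
/-!
Putting `b = c` in the Bol* identity and using idempotency and the left invertive law gives
`(x * y) * z = y * (x * z)`. With the left invertive law this lets the two inner factors of
`b * (a * c)` be swapped, so `x = a * c` and `y = c * a` satisfy `x * y = x` and `y * x = y`;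
computing `(y * x) * y` in two ways then forces `x = y`. Finally, a commutative AG-groupoid is
associative, since `(a * b) * c = (c * b) * a = a * (b * c)`.
-/

section AGGroupoid

variable {S : Type*} [Mul S]

theorem mul_mul_swap_of_bol_star (li : ∀ a b c : S, (a * b) * c = (c * b) * a)
    (bol : ∀ a b c d : S, a * ((b * c) * d) = ((a * b) * c) * d) (idem : ∀ a : S, a * a = a)
    (x y z : S) : (x * y) * z = y * (x * z) := by
  have h := bol y x x z
  rwa [idem x, li y x x, idem x, eq_comm] at h

theorem mul_mul_comm_of_left_invertive (li : ∀ a b c : S, (a * b) * c = (c * b) * a)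
    (swap : ∀ x y z : S, (x * y) * z = y * (x * z)) (a b c : S) :
    b * (a * c) = b * (c * a) :=
  calc b * (a * c) = (a * b) * c := (swap a b c).symm
    _ = (c * b) * a := li a b c
    _ = b * (c * a) := swap c b a

theorem eq_of_mul_eq_of_mul_eq_of_idem (idem : ∀ a : S, a * a = a)
    (swap : ∀ x y z : S, (x * y) * z = y * (x * z)) {x y : S} (hx : x * y = x) (hy : y * x = y) :
    x = y :=
  calc x = x * (y * y) := by rw [idem, hx]
    _ = (y * x) * y := (swap y x y).symm
    _ = y := by rw [hy, idem]

theorem mul_comm_of_left_invertive_of_idem (li : ∀ a b c : S, (a * b) * c = (c * b) * a)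
    (idem : ∀ a : S, a * a = a) (swap : ∀ x y z : S, (x * y) * z = y * (x * z)) (a c : S) :
    a * c = c * a :=
  eq_of_mul_eq_of_mul_eq_of_idem idem swap
    ((mul_mul_comm_of_left_invertive li swap a (a * c) c).symm.trans (idem _))
    ((mul_mul_comm_of_left_invertive li swap c (c * a) a).symm.trans (idem _))

theorem mul_assoc_of_left_invertive_of_comm (li : ∀ a b c : S, (a * b) * c = (c * b) * a)
    (comm : ∀ a b : S, a * b = b * a) (a b c : S) : (a * b) * c = a * (b * c) :=
  calc (a * b) * c = (c * b) * a := li a b c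
    _ = a * (c * b) := comm _ _
    _ = a * (b * c) := by rw [comm c b]

end AGGroupoid

theorem Bol_star_AG_band_is_commutative_semigroup {S : Type*} [Mul S]
    (li : ∀ a b c : S, (a * b) * c = (c * b) * a)
    (bol : ∀ a b c d : S, a * ((b * c) * d) = ((a * b) * c) * d)
    (idem : ∀ a : S, a * a = a) :
    (∀ a b : S, a * b = b * a) ∧
    (∀ a b c : S, (a * b) * c = a * (b * c)) := by
  have swap := mul_mul_swap_of_bol_star li bol idem
  have comm := mul_comm_of_left_invertive_of_idem li idem swap
  exact ⟨comm, mul_assoc_of_left_invertive_of_comm li comm⟩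
end

section
/- Every Bol*-AG-band is a CA-AG-groupoid; that is, if a magma S satisfies the left invertive law, the Bol* identity a·((b·c)·d) = ((a·b)·c)·d, and every element is idempotent (a·a = a for all a), then S satisfies cyclic associativity a·(b·c) = c·(a·b) for all a,b,c. -/
/-! Left invertivity makes every AG-groupoid medial. In a Bol*-AG-band, idempotence lets one
insert `y = y * y` into `x * (y * z)` and apply Bol*, left invertivity and mediality to get
`x * (y * z) = (z * x) * y`; this law makes left multiplications commute the two factors of
their argument, and one more application of Bol* yields cyclic associativity. -/

section AGGroupoid

variable {S : Type*} [Mul S]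

theorem mul_mul_mul_comm_of_leftInvertive (li : ∀ a b c : S, (a * b) * c = (c * b) * a)
    (a b c d : S) : (a * b) * (c * d) = (a * c) * (b * d) :=
  calc (a * b) * (c * d) = ((c * d) * b) * a := li ..
    _ = ((b * d) * c) * a := by rw [li c d b]
    _ = (a * c) * (b * d) := li ..

variable (li : ∀ a b c : S, (a * b) * c = (c * b) * a)
  (bol : ∀ a b c d : S, a * ((b * c) * d) = ((a * b) * c) * d)
  (idem : ∀ a : S, a * a = a)
include li bol idem

theorem mul_mul_eq_mul_mul_of_bolStar_of_idem (x y z : S) : x * (y * z) = (z * x) * y :=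
  calc x * (y * z) = x * ((y * y) * z) := by rw [idem]
    _ = ((x * y) * y) * z := bol ..
    _ = (z * y) * (x * y) := li ..
    _ = (z * x) * (y * y) := mul_mul_mul_comm_of_leftInvertive li ..
    _ = (z * x) * y := by rw [idem]

theorem mul_mul_comm_of_bolStar_of_idem (a b c : S) : a * (b * c) = a * (c * b) :=
  calc a * (b * c) = (c * a) * b := mul_mul_eq_mul_mul_of_bolStar_of_idem li bol idem ..
    _ = (b * a) * c := li ..
    _ = a * (c * b) := (mul_mul_eq_mul_mul_of_bolStar_of_idem li bol idem ..).symm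

end AGGroupoid

theorem Bol_star_AG_band_is_CA_AG_groupoid {S : Type*} [Mul S]
    (li : ∀ a b c : S, (a * b) * c = (c * b) * a)
    (bol : ∀ a b c d : S, a * ((b * c) * d) = ((a * b) * c) * d)
    (idem : ∀ a : S, a * a = a) :
    ∀ a b c : S, a * (b * c) = c * (a * b) := by
  intro a b c
  calc a * (b * c) = a * (c * b) := mul_mul_comm_of_bolStar_of_idem li bol idem ..
    _ = a * ((c * c) * b) := by rw [idem]
    _ = a * ((b * c) * c) := by rw [li]
    _ = ((a * b) * c) * c := bol ..
    _ = (c * c) * (a * b) := li ..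
    _ = c * (a * b) := by rw [idem]
end

section
/- Every CA-AG-groupoid is paramedial; that is, if a magma S satisfies the left invertive law and cyclic associativity, then (a·b)·(c·d) = (d·b)·(c·a) for all a,b,c,d in S. -/
/-! The key fact is that left multiplications commute on products: `x(y(zw)) = y(x(zw))`.
Cyclic associativity and the left invertive law rewrite `(ab)(cd)` as `a(d(cb))`; commuting `a`
and `d` there and undoing the same two moves with the roles of `a` and `d` exchanged gives
`(db)(ca)`. -/

theorem mul_left_comm_of_mul {S : Type*} [Mul S]
    (li : ∀ a b c : S, (a * b) * c = (c * b) * a)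
    (ca : ∀ a b c : S, a * (b * c) = c * (a * b)) (x y z w : S) :
    x * (y * (z * w)) = y * (x * (z * w)) :=
  calc x * (y * (z * w))
      = x * (w * (y * z)) := by rw [ca y z w]
    _ = w * ((y * z) * x) := (ca _ _ _).symm
    _ = w * ((x * z) * y) := by rw [li y z x]
    _ = y * (w * (x * z)) := ca _ _ _
    _ = y * (x * (z * w)) := by rw [ca x z w]

theorem CA_AG_groupoid_is_paramedial {S : Type*} [Mul S]
    (li : ∀ a b c : S, (a * b) * c = (c * b) * a)
    (ca : ∀ a b c : S, a * (b * c) = c * (a * b)) :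
    ∀ a b c d : S, (a * b) * (c * d) = (d * b) * (c * a) := by
  intro a b c d
  calc (a * b) * (c * d)
      = d * ((a * b) * c) := ca _ _ _
    _ = d * ((c * b) * a) := by rw [li a b c]
    _ = a * (d * (c * b)) := ca _ _ _
    _ = d * (a * (c * b)) := mul_left_comm_of_mul li ca _ _ _ _
    _ = a * ((c * b) * d) := (ca _ _ _).symm
    _ = a * ((d * b) * c) := by rw [li c b d]
    _ = (d * b) * (c * a) := (ca _ _ _).symm
end

section
/- Every paramedial AG-band is a CA-AG-groupoid; that is, if a magma S satisfies the left invertive law, the paramedial law (a·b)·(c·d) = (d·b)·(c·a), and every element is idempotent (a·a = a for all a), then S satisfies cyclic associativity a·(b·c) = c·(a·b) for all a,b,c. -/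
/-! Writing `a = a * a`, the paramedial and left invertive laws make an AG-band associative;
associativity turns the left invertive law `(a * a) * b = (b * a) * a` into commutativity,
and a commutative semigroup is cyclically associative. -/

section

variable {S : Type*} [Mul S]

theorem mul_assoc_of_paramedial_of_idem
    (li : ∀ a b c : S, (a * b) * c = (c * b) * a)
    (pm : ∀ a b c d : S, (a * b) * (c * d) = (d * b) * (c * a))
    (idem : ∀ a : S, a * a = a) (a b c : S) :
    a * (b * c) = (a * b) * c :=
  calc a * (b * c) = (a * a) * (b * c) := by rw [idem]
    _ = (c * a) * (b * a) := pm a a b c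
    _ = ((b * a) * a) * c := li c a (b * a)
    _ = ((a * a) * b) * c := by rw [li b a a]
    _ = (a * b) * c := by rw [idem]

theorem mul_comm_of_leftInvertive_of_assoc_of_idem
    (li : ∀ a b c : S, (a * b) * c = (c * b) * a)
    (assoc : ∀ a b c : S, a * (b * c) = (a * b) * c)
    (idem : ∀ a : S, a * a = a) (a b : S) :
    a * b = b * a :=
  calc a * b = (a * a) * b := by rw [idem]
    _ = (b * a) * a := li a a b
    _ = b * (a * a) := (assoc b a a).symm
    _ = b * a := by rw [idem]

end

theorem paramedial_AG_band_is_CA_AG_groupoid {S : Type*} [Mul S]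
    (li : ∀ a b c : S, (a * b) * c = (c * b) * a)
    (pm : ∀ a b c d : S, (a * b) * (c * d) = (d * b) * (c * a))
    (idem : ∀ a : S, a * a = a) :
    ∀ a b c : S, a * (b * c) = c * (a * b) := by
  have assoc := mul_assoc_of_paramedial_of_idem li pm idem
  have comm := mul_comm_of_leftInvertive_of_assoc_of_idem li assoc idem
  intro a b c
  rw [assoc, comm]
end

section
/- Every CA-AG-groupoid is left nuclear square; that is, if a magma S satisfies the left invertive law and cyclic associativity, then (a·a)·(b·c) = ((a·a)·b)·c for all a,b,c in S. -/
/-! Cyclic associativity and the left invertive law together put every product `x * y`, not just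
every square, in the left nucleus: both sides of `(x * y) * (b * c) = ((x * y) * b) * c` equal
`(c * b) * (x * y)`. -/

def IsLeftNuclear {S : Type*} [Mul S] (z : S) : Prop :=
  ∀ b c : S, z * (b * c) = (z * b) * c

theorem isLeftNuclear_mul {S : Type*} [Mul S]
    (li : ∀ a b c : S, (a * b) * c = (c * b) * a)
    (ca : ∀ a b c : S, a * (b * c) = c * (a * b)) (x y : S) :
    IsLeftNuclear (x * y) := by
  intro b c
  calc (x * y) * (b * c) = c * ((x * y) * b) := ca _ _ _
    _ = c * ((b * y) * x) := by rw [li x y b]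
    _ = x * (c * (b * y)) := ca _ _ _
    _ = x * (y * (c * b)) := by rw [ca c b y]
    _ = (c * b) * (x * y) := ca _ _ _
    _ = ((x * y) * b) * c := (li _ _ _).symm

theorem CA_AG_groupoid_is_left_nuclear_square {S : Type*} [Mul S]
    (li : ∀ a b c : S, (a * b) * c = (c * b) * a)
    (ca : ∀ a b c : S, a * (b * c) = c * (a * b)) :
    ∀ a b c : S, (a * a) * (b * c) = ((a * a) * b) * c :=
  fun a => isLeftNuclear_mul li ca a a
end

section
/- Every CA-AG-groupoid is right nuclear square; that is, if a magma S satisfies the left invertive law and cyclic associativity, then (a·b)·(c·c) = a·(b·(c·c)) for all a,b,c in S. -/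
theorem CA_AG_groupoid_is_right_nuclear_square {S : Type*} [Mul S]
    (li : ∀ a b c : S, (a * b) * c = (c * b) * a)
    (ca : ∀ a b c : S, a * (b * c) = c * (a * b)) :
    ∀ a b c : S, (a * b) * (c * c) = a * (b * (c * c)) := by
  intro a b c
  calc (a * b) * (c * c) = c * ((a * b) * c) := ca (a * b) c c
    _ = c * ((c * b) * a) := by rw [li a b c]
    _ = a * (c * (c * b)) := ca c (c * b) a
    _ = a * (b * (c * c)) := by rw [ca c c b]
end

section
/- Every left alternative CA-AG-groupoid is middle nuclear square; that is, if a magma S satisfies the left invertive law, cyclic associativity, and the left alternative law (a·a)·b = a·(a·b) for all a,b, then a·((b·b)·c) = (a·(b·b))·c for all a,b,c in S. -/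
/-!
In a CA-AG-groupoid every product `(b * d) * c` commutes with every element (by the medial law,
which holds in any AG-groupoid), and `(a * (b * d)) * c = (d * (b * c)) * a`. With `d = b` and the
left alternative law `(b * b) * c = b * (b * c)` this gives
`a * ((b * b) * c) = ((b * b) * c) * a = (b * (b * c)) * a = (a * (b * b)) * c`.
-/

section AGGroupoid

variable {S : Type*} [Mul S]

theorem mul_mul_mul_comm_of_left_invertive (li : ∀ a b c : S, a * b * c = c * b * a)
    (a b c d : S) : a * b * (c * d) = a * c * (b * d) := by
  rw [li a b (c * d), li c d b, li (b * d) c a]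

theorem commute_mul_mul_of_cyclic_assoc (li : ∀ a b c : S, a * b * c = c * b * a)
    (ca : ∀ a b c : S, a * (b * c) = c * (a * b)) (a b c d : S) :
    Commute a (b * d * c) :=
  calc a * (b * d * c) = c * (a * (b * d)) := ca a (b * d) c
    _ = c * (d * (a * b)) := by rw [ca a b d]
    _ = a * b * (c * d) := ca c d (a * b)
    _ = a * c * (b * d) := mul_mul_mul_comm_of_left_invertive li a b c d
    _ = b * d * c * a := li a c (b * d)

theorem mul_mul_mul_eq_of_cyclic_assoc (li : ∀ a b c : S, a * b * c = c * b * a)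
    (ca : ∀ a b c : S, a * (b * c) = c * (a * b)) (a b c d : S) :
    a * (b * d) * c = d * (b * c) * a :=
  calc a * (b * d) * c = d * (a * b) * c := by rw [ca a b d]
    _ = c * (a * b) * d := li d (a * b) c
    _ = a * (b * c) * d := by rw [ca a b c]
    _ = d * (b * c) * a := li a (b * c) d

end AGGroupoid

theorem left_alternative_CA_AG_groupoid_is_middle_nuclear_square {S : Type*} [Mul S]
    (li : ∀ a b c : S, (a * b) * c = (c * b) * a)
    (ca : ∀ a b c : S, a * (b * c) = c * (a * b))
    (la : ∀ a b : S, (a * a) * b = a * (a * b)) :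
    ∀ a b c : S, a * ((b * b) * c) = (a * (b * b)) * c := by
  intro a b c
  calc a * ((b * b) * c) = (b * b) * c * a := commute_mul_mul_of_cyclic_assoc li ca a b c b
    _ = b * (b * c) * a := by rw [la b c]
    _ = (a * (b * b)) * c := (mul_mul_mul_eq_of_cyclic_assoc li ca a b c b).symm
end

section
/- Every left alternative CA-AG-groupoid is nuclear square; that is, if a magma S satisfies the left invertive law, cyclic associativity, and the left alternative law (a·a)·b = a·(a·b) for all a,b, then S satisfies all three identities: (a·a)·(b·c) = ((a·a)·b)·c, a·((b·b)·c) = (a·(b·b))·c, and (a·b)·(c·c) = a·(b·(c·c)) for all a,b,c in S. -/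
section CAAGGroupoid

variable {S : Type*} [Mul S]

theorem left_nuclear_square_of_cyclic_assoc
    (li : ∀ a b c : S, (a * b) * c = (c * b) * a)
    (ca : ∀ a b c : S, a * (b * c) = c * (a * b)) (a b c : S) :
    (a * a) * (b * c) = ((a * a) * b) * c :=
  calc (a * a) * (b * c) = b * (c * (a * a)) := (ca b c (a * a)).symm
    _ = b * (a * (c * a)) := by rw [ca c a a]
    _ = (c * a) * (b * a) := ca b a (c * a)
    _ = ((b * a) * a) * c := (li (b * a) a c).symm
    _ = ((a * a) * b) * c := by rw [li b a a]

theorem middle_nuclear_square_of_left_alternative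
    (li : ∀ a b c : S, (a * b) * c = (c * b) * a)
    (ca : ∀ a b c : S, a * (b * c) = c * (a * b))
    (la : ∀ a b : S, (a * a) * b = a * (a * b)) (a b c : S) :
    a * ((b * b) * c) = (a * (b * b)) * c :=
  calc a * ((b * b) * c) = (b * b) * (c * a) := (ca (b * b) c a).symm
    _ = b * (b * (c * a)) := la b (c * a)
    _ = (c * a) * (b * b) := ca b b (c * a)
    _ = ((b * b) * a) * c := (li (b * b) a c).symm
    _ = (b * (b * a)) * c := by rw [la b a]
    _ = (a * (b * b)) * c := by rw [ca b b a]

theorem right_nuclear_square_of_left_alternative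
    (ca : ∀ a b c : S, a * (b * c) = c * (a * b))
    (la : ∀ a b : S, (a * a) * b = a * (a * b)) (a b c : S) :
    (a * b) * (c * c) = a * (b * (c * c)) :=
  calc (a * b) * (c * c) = c * (c * (a * b)) := (ca c c (a * b)).symm
    _ = (c * c) * (a * b) := (la c (a * b)).symm
    _ = a * (b * (c * c)) := (ca a b (c * c)).symm

end CAAGGroupoid

theorem left_alternative_CA_AG_groupoid_is_nuclear_square {S : Type*} [Mul S]
    (li : ∀ a b c : S, (a * b) * c = (c * b) * a)
    (ca : ∀ a b c : S, a * (b * c) = c * (a * b))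
    (la : ∀ a b : S, (a * a) * b = a * (a * b)) :
    (∀ a b c : S, (a * a) * (b * c) = ((a * a) * b) * c) ∧
    (∀ a b c : S, a * ((b * b) * c) = (a * (b * b)) * c) ∧
    (∀ a b c : S, (a * b) * (c * c) = a * (b * (c * c))) :=
  ⟨left_nuclear_square_of_cyclic_assoc li ca,
    middle_nuclear_square_of_left_alternative li ca la,
    right_nuclear_square_of_left_alternative ca la⟩
end

section
/- Every right alternative CA-AG-groupoid is nuclear square; that is, if a magma S satisfies the left invertive law, cyclic associativity, and the right alternative law b·(a·a) = (b·a)·a for all a,b, then S satisfies all three identities: (a·a)·(b·c) = ((a·a)·b)·c, a·((b·b)·c) = (a·(b·b))·c, and (a·b)·(c·c) = a·(b·(c·c)) for all a,b,c in S. -/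
namespace AGGroupoid

def IsLeftInvertive (S : Type*) [Mul S] : Prop :=
  ∀ a b c : S, (a * b) * c = (c * b) * a

def IsCyclicAssociative (S : Type*) [Mul S] : Prop :=
  ∀ a b c : S, a * (b * c) = c * (a * b)

def IsRightAlternative (S : Type*) [Mul S] : Prop :=
  ∀ a b : S, b * (a * a) = (b * a) * a

variable {S : Type*} [Mul S]

theorem assoc_mul_self_left (li : IsLeftInvertive S) (ca : IsCyclicAssociative S) (a b c : S) :
    (a * a) * (b * c) = ((a * a) * b) * c :=
  calc (a * a) * (b * c) = b * (c * (a * a)) := (ca b c (a * a)).symm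
    _ = b * (a * (c * a)) := by rw [ca c a a]
    _ = (c * a) * (b * a) := ca b a (c * a)
    _ = ((b * a) * a) * c := li c a (b * a)
    _ = ((a * a) * b) * c := by rw [li b a a]

theorem assoc_mul_self_middle (li : IsLeftInvertive S) (ca : IsCyclicAssociative S)
    (ra : IsRightAlternative S) (a b c : S) :
    a * ((b * b) * c) = (a * (b * b)) * c :=
  calc a * ((b * b) * c) = c * (a * (b * b)) := ca a (b * b) c
    _ = c * (b * (a * b)) := by rw [ca a b b]
    _ = (a * b) * (c * b) := ca c b (a * b)
    _ = ((c * b) * b) * a := li a b (c * b)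
    _ = (c * (b * b)) * a := by rw [← ra b c]
    _ = (a * (b * b)) * c := li c (b * b) a

theorem assoc_mul_self_right (li : IsLeftInvertive S) (ca : IsCyclicAssociative S)
    (ra : IsRightAlternative S) (a b c : S) :
    (a * b) * (c * c) = a * (b * (c * c)) :=
  calc (a * b) * (c * c) = ((a * b) * c) * c := ra c (a * b)
    _ = (c * c) * (a * b) := li (a * b) c c
    _ = a * (b * (c * c)) := (ca a b (c * c)).symm

end AGGroupoid

theorem right_alternative_CA_AG_groupoid_is_nuclear_square {S : Type*} [Mul S]
    (li : ∀ a b c : S, (a * b) * c = (c * b) * a)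
    (ca : ∀ a b c : S, a * (b * c) = c * (a * b))
    (ra : ∀ a b : S, b * (a * a) = (b * a) * a) :
    (∀ a b c : S, (a * a) * (b * c) = ((a * a) * b) * c) ∧
    (∀ a b c : S, a * ((b * b) * c) = (a * (b * b)) * c) ∧
    (∀ a b c : S, (a * b) * (c * c) = a * (b * (c * c))) :=
  ⟨AGGroupoid.assoc_mul_self_left li ca, AGGroupoid.assoc_mul_self_middle li ca ra,
    AGGroupoid.assoc_mul_self_right li ca ra⟩
end

section
/- Every right commutative AG**-groupoid is a CA-AG-groupoid; that is, if a magma S satisfies the left invertive law, the AG** identity a·(b·c) = b·(a·c), and right commutativity a·(b·c) = a·(c·b) for all a,b,c, then S satisfies cyclic associativity a·(b·c) = c·(a·b) for all a,b,c. -/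
theorem right_commutative_AG_star_star_is_CA_general {S : Type*} [Mul S]
    (agss : ∀ a b c : S, a * (b * c) = b * (a * c))
    (rc : ∀ a b c : S, a * (b * c) = a * (c * b)) :
    ∀ a b c : S, a * (b * c) = c * (a * b) := fun a b c =>
  calc a * (b * c) = a * (c * b) := rc a b c
    _ = c * (a * b) := agss a c b

theorem right_commutative_AG_star_star_is_CA {S : Type*} [Mul S]
    (li : ∀ a b c : S, (a * b) * c = (c * b) * a)
    (agss : ∀ a b c : S, a * (b * c) = b * (a * c))
    (rc : ∀ a b c : S, a * (b * c) = a * (c * b)) :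
    ∀ a b c : S, a * (b * c) = c * (a * b) :=
  right_commutative_AG_star_star_is_CA_general agss rc
end

section
/- Let S be a CA-AG-groupoid, i.e., a magma satisfying the left invertive law and cyclic associativity. Then S is right commutative (a·(b·c) = a·(c·b) for all a,b,c) if and only if S is an AG**-groupoid (a·(b·c) = b·(a·c) for all a,b,c). -/
theorem CA_AG_groupoid_right_commutative_iff_AG_star_star_general {S : Type*} [Mul S]
    (ca : ∀ a b c : S, a * (b * c) = c * (a * b)) :
    (∀ a b c : S, a * (b * c) = a * (c * b)) ↔
    (∀ a b c : S, a * (b * c) = b * (a * c)) :=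
  forall₃_congr fun a b c => by rw [ca a c b]

theorem CA_AG_groupoid_right_commutative_iff_AG_star_star {S : Type*} [Mul S]
    (li : ∀ a b c : S, (a * b) * c = (c * b) * a)
    (ca : ∀ a b c : S, a * (b * c) = c * (a * b)) :
    (∀ a b c : S, a * (b * c) = a * (c * b)) ↔
    (∀ a b c : S, a * (b * c) = b * (a * c)) :=
  CA_AG_groupoid_right_commutative_iff_AG_star_star_general ca
end

section
/- Every AG*-band is a semigroup; that is, if a magma S satisfies the left invertive law, the AG* identity (a·b)·c = b·(a·c), and every element is idempotent (a·a = a for all a), then S is associative: (a·b)·c = a·(b·c) for all a,b,c. -/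
/-!
The AG* law `(a * b) * c = b * (a * c)` turns associativity into the identity `(a * b) * c = (b * a) * c`.
Idempotency makes `u = (a * b) * c` and `v = (b * a) * c` satisfy `u * v = u` and `v * u = v`, and any
such pair is equal: `u = u * u = (u * v) * u = v * (u * u) = v * u = v`.
-/

namespace AGStarBand

variable {S : Type*} [Mul S]

theorem mul_mul_self_left (ags : ∀ a b c : S, a * b * c = b * (a * c)) (idem : ∀ a : S, a * a = a)
    (a b : S) : a * (a * b) = a * b := by
  rw [← ags, idem]

theorem mul_mul_self_right (ags : ∀ a b c : S, a * b * c = b * (a * c)) (idem : ∀ a : S, a * a = a)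
    (a b : S) : b * (a * b) = a * b := by
  calc b * (a * b) = b * (a * (a * b)) := by rw [mul_mul_self_left ags idem]
    _ = a * b * (a * b) := (ags _ _ _).symm
    _ = a * b := idem _

theorem mul_mul_mul_self_inner (ags : ∀ a b c : S, a * b * c = b * (a * c))
    (idem : ∀ a : S, a * a = a) (a b c : S) : b * (a * (b * c)) = b * (a * c) := by
  calc b * (a * (b * c)) = a * b * (b * c) := (ags _ _ _).symm
    _ = b * (a * b) * c := (ags _ _ _).symm
    _ = b * (a * c) := by rw [mul_mul_self_right ags idem, ags]

theorem mul_mul_mul_mul_swap (ags : ∀ a b c : S, a * b * c = b * (a * c))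
    (idem : ∀ a : S, a * a = a) (a b c : S) : a * b * c * (b * a * c) = a * b * c := by
  calc a * b * c * (b * a * c) = c * (a * b * (a * (b * c))) := by rw [ags (a * b) c, ags b a c]
    _ = c * (b * (a * c)) := by
      rw [ags a b, mul_mul_self_left ags idem, mul_mul_mul_self_inner ags idem]
    _ = a * b * c := by rw [← ags a b c, mul_mul_self_right ags idem]

theorem eq_of_mul_eq_of_mul_eq (ags : ∀ a b c : S, a * b * c = b * (a * c))
    (idem : ∀ a : S, a * a = a) {u v : S} (huv : u * v = u) (hvu : v * u = v) : u = v :=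
  calc u = u * v * u := by rw [huv, idem]
    _ = v * (u * u) := ags _ _ _
    _ = v := by rw [idem, hvu]

end AGStarBand

open AGStarBand in
theorem AG_star_band_is_semigroup_general {S : Type*} [Mul S]
    (ags : ∀ a b c : S, (a * b) * c = b * (a * c))
    (idem : ∀ a : S, a * a = a) :
    ∀ a b c : S, (a * b) * c = a * (b * c) := by
  intro a b c
  calc a * b * c = b * a * c :=
        eq_of_mul_eq_of_mul_eq ags idem (mul_mul_mul_mul_swap ags idem a b c)
          (mul_mul_mul_mul_swap ags idem b a c)
    _ = a * (b * c) := ags b a c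

theorem AG_star_band_is_semigroup {S : Type*} [Mul S]
    (li : ∀ a b c : S, (a * b) * c = (c * b) * a)
    (ags : ∀ a b c : S, (a * b) * c = b * (a * c))
    (idem : ∀ a : S, a * a = a) :
    ∀ a b c : S, (a * b) * c = a * (b * c) :=
  AG_star_band_is_semigroup_general ags idem
end

section
/- In a CA-AG-groupoid S (a magma satisfying the left invertive law and cyclic associativity), the set of idempotent elements forms a semilattice: for all a,b in S with a·a = a and b·b = b, one has a·b = b·a and (a·b)·(a·b) = a·b. -/
/-! With `u = a * b` and `v = b * a`, cyclic associativity and the idempotence of `a` and `b`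
give `v = a * u` and `u = b * v`, hence `u = b * (a * u) = u * v` and likewise `v = v * u`.
The left invertive law gives `u * u = u`, and then `u * v = (u * u) * v = (v * u) * u = v`,
so `u = v`. -/

section Idempotent

variable {S : Type*} [Mul S]

theorem mul_idem_eq_idem_mul_mul (ca : ∀ a b c : S, a * (b * c) = c * (a * b))
    {a : S} (ha : a * a = a) (b : S) : b * a = a * (a * b) :=
  calc b * a = b * (a * a) := by rw [ha]
    _ = a * (b * a) := ca b a a
    _ = a * (a * b) := ca a b a

theorem idem_mul_eq_mul_mul_idem (li : ∀ a b c : S, a * b * c = c * b * a)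
    {a : S} (ha : a * a = a) (b : S) : a * b = b * a * a :=
  calc a * b = a * a * b := by rw [ha]
    _ = b * a * a := li a a b

theorem mul_mul_self_of_idem (li : ∀ a b c : S, a * b * c = c * b * a)
    {a b : S} (ha : a * a = a) (hb : b * b = b) : a * b * (a * b) = a * b :=
  calc a * b * (a * b) = a * b * b * a := (li (a * b) b a).symm
    _ = b * a * a := by rw [← idem_mul_eq_mul_mul_idem li hb a]
    _ = a * b := (idem_mul_eq_mul_mul_idem li ha b).symm

theorem mul_eq_mul_mul_swap_of_idem (ca : ∀ a b c : S, a * (b * c) = c * (a * b))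
    {a b : S} (ha : a * a = a) (hb : b * b = b) : a * b = a * b * (b * a) :=
  calc a * b = b * (b * a) := mul_idem_eq_idem_mul_mul ca hb a
    _ = b * (a * (a * b)) := by rw [← mul_idem_eq_idem_mul_mul ca ha b]
    _ = a * b * (b * a) := ca b a (a * b)

theorem mul_eq_right_of_mul_self_of_mul_eq_left (li : ∀ a b c : S, a * b * c = c * b * a)
    {u v : S} (hu : u * u = u) (hvu : v * u = v) : u * v = v :=
  calc u * v = u * u * v := by rw [hu]
    _ = v * u * u := li u u v
    _ = v := by rw [hvu, hvu]

end Idempotent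

theorem CA_AG_groupoid_idempotents_semilattice {S : Type*} [Mul S]
    (li : ∀ a b c : S, (a * b) * c = (c * b) * a)
    (ca : ∀ a b c : S, a * (b * c) = c * (a * b)) :
    ∀ a b : S, a * a = a → b * b = b →
      a * b = b * a ∧ (a * b) * (a * b) = a * b := by
  intro a b ha hb
  have hab_idem : a * b * (a * b) = a * b := mul_mul_self_of_idem li ha hb
  refine ⟨?_, hab_idem⟩
  calc a * b = a * b * (b * a) := mul_eq_mul_mul_swap_of_idem ca ha hb
    _ = b * a := mul_eq_right_of_mul_self_of_mul_eq_left li hab_idem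
        (mul_eq_mul_mul_swap_of_idem ca hb ha).symm
end

section
/- Let S be a CA-AG-groupoid (a magma satisfying the left invertive law and cyclic associativity) and let e in S be idempotent (e·e = e). Then e acts as a two-sided identity on the sets eS and Se: for every a in S, e·(e·a) = e·a, (e·a)·e = e·a, e·(a·e) = a·e, and (a·e)·e = a·e. -/
/-! An idempotent `e` of a CA-AG-groupoid commutes with every element: cyclic associativity gives
`e * (e * x) = x * e` and `e * (x * e) = x * e`, hence `x * e * e = x * e`, while the left invertive
law gives `e * x = x * e * e`. The four identities follow at once. -/

section IdempotentElem

variable {S : Type*} [Mul S] {e : S}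

theorem idem_mul_idem_mul (ca : ∀ a b c : S, a * (b * c) = c * (a * b))
    (he : IsIdempotentElem e) (x : S) : e * (e * x) = x * e := by
  rw [ca, he.eq]

theorem idem_mul_mul_idem (ca : ∀ a b c : S, a * (b * c) = c * (a * b))
    (he : IsIdempotentElem e) (x : S) : e * (x * e) = x * e := by
  calc e * (x * e) = e * (x * (e * e)) := by rw [he.eq]
    _ = (e * e) * (e * x) := ca e x (e * e)
    _ = x * e := by rw [he.eq, idem_mul_idem_mul ca he]

theorem mul_idem_mul_idem (ca : ∀ a b c : S, a * (b * c) = c * (a * b))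
    (he : IsIdempotentElem e) (x : S) : x * e * e = x * e := by
  rw [← idem_mul_idem_mul ca he, idem_mul_mul_idem ca he, idem_mul_mul_idem ca he]

theorem idem_mul_eq_mul_idem_mul_idem (li : ∀ a b c : S, (a * b) * c = (c * b) * a)
    (he : IsIdempotentElem e) (x : S) : e * x = x * e * e := by
  rw [← li, he.eq]

theorem commute_idem (li : ∀ a b c : S, (a * b) * c = (c * b) * a)
    (ca : ∀ a b c : S, a * (b * c) = c * (a * b)) (he : IsIdempotentElem e) (x : S) :
    Commute e x :=
  (idem_mul_eq_mul_idem_mul_idem li he x).trans (mul_idem_mul_idem ca he x)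

end IdempotentElem

theorem CA_AG_groupoid_idempotent_identity_on_eS_Se {S : Type*} [Mul S]
    (li : ∀ a b c : S, (a * b) * c = (c * b) * a)
    (ca : ∀ a b c : S, a * (b * c) = c * (a * b))
    (e : S) (he : e * e = e) :
    ∀ a : S, e * (e * a) = e * a ∧ (e * a) * e = e * a ∧
      e * (a * e) = a * e ∧ (a * e) * e = a * e := by
  intro a
  have hcomm : e * a = a * e := commute_idem li ca he a
  refine ⟨?_, ?_, idem_mul_mul_idem ca he a, mul_idem_mul_idem ca he a⟩
  · rw [idem_mul_idem_mul ca he, hcomm]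
  · rw [hcomm, mul_idem_mul_idem ca he]
end

section
/- Every left commutative AG*-groupoid is a CA-AG-groupoid; that is, if a magma S satisfies the left invertive law, the AG* identity (a·b)·c = b·(a·c), and left commutativity (a·b)·c = (b·a)·c for all a,b,c, then S satisfies cyclic associativity a·(b·c) = c·(a·b) for all a,b,c. -/
theorem left_commutative_AG_star_is_CA {S : Type*} [Mul S]
    (li : ∀ a b c : S, (a * b) * c = (c * b) * a)
    (ags : ∀ a b c : S, (a * b) * c = b * (a * c))
    (lc : ∀ a b c : S, (a * b) * c = (b * a) * c) :
    ∀ a b c : S, a * (b * c) = c * (a * b) := by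
  intro a b c
  calc a * (b * c) = (b * a) * c := (ags b a c).symm
    _ = (c * a) * b := li b a c
    _ = (a * c) * b := lc c a b
    _ = c * (a * b) := ags a c b
end
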